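/- Let L be a finite lattice, S a pure interval of L with least element having extent-intent pair (A_S,B_S) and greatest element (C_S,D_S) in a θ-irreducible context K = (G,M,I). Then the map φ sending a concept (A,B) to (C_S,B_S) if (A,B) ∈ S, to (A, B ∪ B_S) if (A,B) ∈ S↓, to (A ∪ C_S, B) if (A,B) ∈ S↑, and to (A,B) if (A,B) ∈ S∥, is a surjective order-preserving map from B(K) onto B(G,M,I_S), where I_S = I ∪ (C_S × B_S). -/

import Mathlib

open Classical

variable {L : Type*}

/-- The interval relation `θ_S` for the single interval `S = [u,v]`. -/
def irel [Preorder L] (u v : L) (x y : L) : Prop :=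
  x = y ∨ (x ∈ Set.Icc u v ∧ y ∈ Set.Icc u v)

/-- `θ_S` as a setoid. -/
def irelSetoid [Preorder L] (u v : L) : Setoid L where
  r := irel u v
  iseqv := by
    constructor
    · intro x; exact Or.inl rfl
    · rintro x y (rfl | ⟨hx, hy⟩)
      · exact Or.inl rfl
      · exact Or.inr ⟨hy, hx⟩
    · rintro x y z (rfl | ⟨hx, hy⟩) h
      · exact h
      · rcases h with rfl | ⟨hy', hz⟩
        · exact Or.inr ⟨hx, hy⟩
        · exact Or.inr ⟨hx, hz⟩

/-- `x_θ`, the least element of the class of `x`. -/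
noncomputable def ilow [Preorder L] (u v : L) (x : L) : L :=
  if x ∈ Set.Icc u v then u else x

/-- `x^θ`, the greatest element of the class of `x`. -/
noncomputable def ihigh [Preorder L] (u v : L) (x : L) : L :=
  if x ∈ Set.Icc u v then v else x

/-- `S↓`, the elements outside `S` strictly below some element of `S`. -/
def iSdown [Preorder L] (u v : L) : Set L :=
  {z | z ∉ Set.Icc u v ∧ ∃ s ∈ Set.Icc u v, z < s}

/-- `S↑`, the elements outside `S` strictly above some element of `S`. -/
def iSupSet [Preorder L] (u v : L) : Set L :=
  {z | z ∉ Set.Icc u v ∧ ∃ s ∈ Set.Icc u v, s < z}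

/-- `S∥`, the elements outside `S` incomparable to all of `S`. -/
def iSpar [Preorder L] (u v : L) : Set L :=
  {z | z ∉ Set.Icc u v ∧ ∀ s ∈ Set.Icc u v, ¬ s < z ∧ ¬ z < s}

/-- The relation `≤_θ` on representatives. -/
def ile [Preorder L] (u v : L) (x y : L) : Prop :=
  ilow u v x ≤ ihigh u v y ∨ (x ∈ iSdown u v ∧ y ∈ iSupSet u v)

/-- The induced relation `≤_θ` on the factor set `L/θ`. -/
def iLeQ [Preorder L] (u v : L) (a b : Quotient (irelSetoid u v)) : Prop :=
  ∃ x y : L, a = Quotient.mk (irelSetoid u v) x ∧ b = Quotient.mk (irelSetoid u v) y ∧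
    ile u v x y

/-- `S` is a nested interval. -/
def iNested [Lattice L] (u v : L) : Prop :=
  ∃ x y a w : L, x ∈ iSpar u v ∧ y ∈ iSpar u v ∧ a ∈ iSupSet u v ∧ w ∈ iSdown u v ∧
    y = x ⊔ w ∧ x = y ⊓ a ∧ ¬ y ≤ a ∧ ¬ w ≤ x

/-- `c` is `θ`-`⋁`-irreducible for the interval relation collapsing `S`: it is `⋁`-irreducible,
or it lies outside `S` and has at most one lower neighbour outside `S`. -/
def ThetaSupIrred {L : Type*} [Lattice L] (cbot ctop : L) (c : L) : Prop :=
  SupIrred c ∨ (c ∉ Set.Icc cbot ctop ∧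
    {d : L | d ∉ Set.Icc cbot ctop ∧ d ⋖ c}.Subsingleton)

/-- `c` is `θ`-`⋀`-irreducible for the interval relation collapsing `S`. -/
def ThetaInfIrred {L : Type*} [Lattice L] (cbot ctop : L) (c : L) : Prop :=
  InfIrred c ∨ (c ∉ Set.Icc cbot ctop ∧
    {d : L | d ∉ Set.Icc cbot ctop ∧ c ⋖ d}.Subsingleton)

/-!
The map sends a concept to the `I_S`-concept generated by its extent, so it is monotone. Adding
the rectangle `C_S × B_S` to `I` only adds `B_S ∩ (X \ C_S)'` to the derivation `X'` of a set of
objects and `C_S ∩ (Y \ B_S)'` to that of a set of attributes, so the four formulas reduce to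
`C_S ∩ (B \ B_S)' ⊆ A` when `(A_S,B_S) ≰ (A,B)` and dually `B_S ∩ (A \ C_S)' ⊆ B` when
`(A,B) ≰ (C_S,D_S)`. An `I_S`-concept with extent inside `C_S` or intent inside `B_S` has an
`I`-closed extent or intent; for any other one, purity forces the `I`-concepts generated by its
extent and by its intent to coincide, so its extent is `I`-closed as well.
-/
open Set OrderDual

section Lattice

section PartialOrder

variable [PartialOrder L] {u v z : L}

lemma mem_iSdown_iff (huv : u ≤ v) : z ∈ iSdown u v ↔ ¬ u ≤ z ∧ z ≤ v := by
  refine ⟨fun ⟨hz, s, hs, hzs⟩ => ⟨fun h => hz ⟨h, hzs.le.trans hs.2⟩, hzs.le.trans hs.2⟩,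
    fun ⟨hu, hv⟩ => ⟨fun h => hu h.1, v, ⟨huv, le_rfl⟩, hv.lt_of_ne ?_⟩⟩
  rintro rfl
  exact hu huv

lemma mem_iSupSet_iff (huv : u ≤ v) : z ∈ iSupSet u v ↔ u ≤ z ∧ ¬ z ≤ v := by
  refine ⟨fun ⟨hz, s, hs, hsz⟩ => ⟨hs.1.trans hsz.le, fun h => hz ⟨hs.1.trans hsz.le, h⟩⟩,
    fun ⟨hu, hv⟩ => ⟨fun h => hv h.2, u, ⟨le_rfl, huv⟩, hu.lt_of_ne ?_⟩⟩
  rintro rfl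
  exact hv huv

lemma mem_iSpar_iff (huv : u ≤ v) : z ∈ iSpar u v ↔ ¬ u ≤ z ∧ ¬ z ≤ v := by
  refine ⟨fun ⟨hz, hs⟩ => ⟨fun h => ?_, fun h => ?_⟩,
    fun ⟨hu, hv⟩ => ⟨fun h => hu h.1, fun s hs => ⟨fun h => hu (hs.1.trans h.le),
      fun h => hv (h.le.trans hs.2)⟩⟩⟩
  · obtain rfl | hlt := h.eq_or_lt
    exacts [hz ⟨le_rfl, huv⟩, (hs u ⟨le_rfl, huv⟩).1 hlt]
  · obtain rfl | hlt := h.eq_or_lt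
    exacts [hz ⟨huv, le_rfl⟩, (hs v ⟨huv, le_rfl⟩).2 hlt]

end PartialOrder

variable [Lattice L] {u v : L}

lemma iNested_of_toDual (huv : u ≤ v) (h : iNested (toDual v) (toDual u)) : iNested u v := by
  have huv' : toDual v ≤ toDual u := toDual_le_toDual.2 huv
  obtain ⟨x, y, a, w, hx, hy, ha, hw, hyx, hxy, hya, hwx⟩ := h
  rw [mem_iSpar_iff huv'] at hx hy
  rw [mem_iSupSet_iff huv'] at ha
  rw [mem_iSdown_iff huv'] at hw
  refine ⟨ofDual y, ofDual x, ofDual w, ofDual a, (mem_iSpar_iff huv).2 ⟨hy.2, hy.1⟩,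
    (mem_iSpar_iff huv).2 ⟨hx.2, hx.1⟩, (mem_iSupSet_iff huv).2 ⟨hw.2, hw.1⟩,
    (mem_iSdown_iff huv).2 ⟨ha.2, ha.1⟩, congrArg ofDual hxy, congrArg ofDual hyx, hwx, hya⟩

lemma thetaSupIrred_of_toDual {t : L} (h : ThetaInfIrred (toDual v) (toDual u) (toDual t)) :
    ThetaSupIrred u v t := by
  refine h.imp infIrred_toDual.1 fun ⟨ht, hs⟩ => ⟨fun h => ht ⟨h.2, h.1⟩, ?_⟩
  rintro d₁ ⟨hd₁, hc₁⟩ d₂ ⟨hd₂, hc₂⟩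
  exact congrArg ofDual <|
    hs (x := toDual d₁) ⟨fun h => hd₁ ⟨h.2, h.1⟩, toDual_covBy_toDual_iff.2 hc₁⟩
      (y := toDual d₂) ⟨fun h => hd₂ ⟨h.2, h.1⟩, toDual_covBy_toDual_iff.2 hc₂⟩

lemma CovBy.inf_eq_of_ne {a b c : L} (hb : a ⋖ b) (hc : a ⋖ c) (hbc : b ≠ c) : b ⊓ c = a := by
  refine (hb.eq_or_eq (le_inf hb.le hc.le) inf_le_left).resolve_right fun h => ?_
  obtain rfl | rfl := hc.eq_or_eq hb.le (inf_eq_left.1 h)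
  exacts [hb.lt.ne' rfl, hbc rfl]

lemma iNested_of_covBy (huv : u ≤ v) {t q e₁ e₂ : L} (hq : q ∈ iSdown u v) (hqt : ¬ q ≤ t)
    (hut : ¬ u ≤ t) (h₁ : t ⋖ e₁) (h₂ : t ⋖ e₂) (he₁ : e₁ ∉ Icc u v) (hue₁ : u ≤ e₁)
    (hqe₂ : q ≤ e₂) (hue₂ : ¬ u ≤ e₂) : iNested u v := by
  have hmeet : e₁ ⊓ e₂ = t := h₁.inf_eq_of_ne h₂ fun h => hue₂ (h ▸ hue₁)
  have htv : ¬ t ≤ v := fun htv => by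
    obtain h | h := h₁.eq_or_eq (le_inf h₁.le htv) inf_le_left
    · exact hut (h ▸ le_inf hue₁ huv)
    · exact he₁ ⟨hue₁, h ▸ inf_le_right⟩
  have hjoin : t ⊔ q = e₂ :=
    (h₂.eq_or_eq le_sup_left (sup_le h₂.le hqe₂)).resolve_left fun h => hqt (h ▸ le_sup_right)
  refine ⟨t, e₂, e₁, q, (mem_iSpar_iff huv).2 ⟨hut, htv⟩,
    (mem_iSpar_iff huv).2 ⟨hue₂, fun h => htv (h₂.le.trans h)⟩,
    (mem_iSupSet_iff huv).2 ⟨hue₁, fun h => he₁ ⟨hue₁, h⟩⟩, hq, hjoin.symm,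
    by rw [inf_comm, hmeet], fun h => h₂.lt.not_ge ?_, hqt⟩
  exact hmeet ▸ le_inf h le_rfl

lemma eq_of_not_iNested (huv : u ≤ v) (hpure : ¬ iNested u v) {x y : L} (hxy : x ≤ y)
    (hjoin : x ⊔ (y ⊓ v) = y) (hmeet : y ⊓ (x ⊔ u) = x) (huy : ¬ u ≤ y) (hxv : ¬ x ≤ v) :
    x = y := by
  by_contra hne
  refine hpure ⟨x, y, x ⊔ u, y ⊓ v, (mem_iSpar_iff huv).2 ⟨fun h => huy (h.trans hxy), hxv⟩,
    (mem_iSpar_iff huv).2 ⟨huy, fun h => hxv (hxy.trans h)⟩,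
    (mem_iSupSet_iff huv).2 ⟨le_sup_right, fun h => hxv (le_sup_left.trans h)⟩,
    (mem_iSdown_iff huv).2 ⟨fun h => huy (h.trans inf_le_left), inf_le_right⟩,
    hjoin.symm, hmeet.symm, fun h => hne ?_, fun h => hne ?_⟩
  · rw [← hmeet, inf_eq_left.2 h]
  · rw [← hjoin, sup_eq_left.2 h]

variable [Finite L]

/-- Take `t` maximal among the elements above `c` lying above neither `q` nor `u`; the hypothesis
excludes that `t` is `θ`-`⋀`-irreducible, and purity excludes two upper covers outside `S`. -/
lemma le_of_forall_thetaInfIrred (huv : u ≤ v) (hpure : ¬ iNested u v) {c q : L}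
    (hq : q ∈ iSdown u v) (hc : ¬ u ≤ c)
    (h : ∀ t, ThetaInfIrred u v t → c ≤ t → ¬ u ≤ t → q ≤ t) : q ≤ c := by
  by_contra hqc
  obtain ⟨t, ⟨hct, hqt, hut⟩, hmax⟩ :=
    (Set.toFinite {t | c ≤ t ∧ ¬ q ≤ t ∧ ¬ u ≤ t}).exists_maximal ⟨c, le_rfl, hqc, hc⟩
  have hcover : ∀ d, t ⋖ d → q ≤ d ∨ u ≤ d := fun d hd => by
    by_contra! hd'
    exact hd.lt.not_ge (hmax ⟨hct.trans hd.le, hd'.1, hd'.2⟩ hd.le)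
  have hirr : ¬ ThetaInfIrred u v t := fun hirr => hqt (h t hirr hct hut)
  simp only [ThetaInfIrred, not_or, not_and, Set.not_subsingleton_iff] at hirr
  obtain ⟨d₁, ⟨hd₁, hc₁⟩, d₂, ⟨hd₂, hc₂⟩, hne⟩ := hirr.2 fun ht => hut ht.1
  have hmeet : d₁ ⊓ d₂ = t := hc₁.inf_eq_of_ne hc₂ hne
  by_cases hu₁ : u ≤ d₁ <;> by_cases hu₂ : u ≤ d₂
  · exact hut (hmeet ▸ le_inf hu₁ hu₂)
  · exact hpure <| iNested_of_covBy huv hq hqt hut hc₁ hc₂ hd₁ hu₁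
      ((hcover d₂ hc₂).resolve_right hu₂) hu₂
  · exact hpure <| iNested_of_covBy huv hq hqt hut hc₂ hc₁ hd₂ hu₂
      ((hcover d₁ hc₁).resolve_right hu₁) hu₁
  · exact hqt <| hmeet ▸
      le_inf ((hcover d₁ hc₁).resolve_right hu₁) ((hcover d₂ hc₂).resolve_right hu₂)

lemma le_of_forall_thetaSupIrred (huv : u ≤ v) (hpure : ¬ iNested u v) {c p : L}
    (hp : p ∈ iSupSet u v) (hc : ¬ c ≤ v)
    (h : ∀ t, ThetaSupIrred u v t → t ≤ c → ¬ t ≤ v → t ≤ p) : c ≤ p := by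
  have huv' : toDual v ≤ toDual u := toDual_le_toDual.2 huv
  rw [mem_iSupSet_iff huv] at hp
  exact le_of_forall_thetaInfIrred (c := toDual c) (q := toDual p) huv'
    (fun hn => hpure (iNested_of_toDual huv hn)) ((mem_iSdown_iff huv').2 ⟨hp.2, hp.1⟩) hc
    fun t ht => h (ofDual t) (thetaSupIrred_of_toDual ht)

end Lattice

section Enrich

variable {G M : Type*}

/-- The relation `I_S = I ∪ (A × B)`. -/
def enrich (I : G → M → Prop) (A : Set G) (B : Set M) : G → M → Prop :=
  fun g m => I g m ∨ (g ∈ A ∧ m ∈ B)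

variable {I : G → M → Prop} {A : Set G} {B : Set M}

lemma upperPolar_enrich (X : Set G) :
    upperPolar (enrich I A B) X = upperPolar I X ∪ B ∩ upperPolar I (X \ A) := by
  ext m
  simp only [mem_upperPolar_iff, enrich, mem_union, mem_inter_iff, mem_sdiff]
  by_cases hm : m ∈ B <;> grind

lemma lowerPolar_enrich (Y : Set M) :
    lowerPolar (enrich I A B) Y = lowerPolar I Y ∪ A ∩ lowerPolar I (Y \ B) := by
  ext g
  simp only [mem_lowerPolar_iff, enrich, mem_union, mem_inter_iff, mem_sdiff]
  by_cases hg : g ∈ A <;> grind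

end Enrich

namespace Concept

variable {G M : Type*} {I : G → M → Prop} {A : Set G} {B : Set M}

instance [Finite G] {r : G → M → Prop} : Finite (Concept G M r) :=
  Finite.of_injective _ extent_injective

lemma extent_subset_lowerPolar_intent_union (e : Concept G M (enrich I A B)) :
    e.extent ⊆ lowerPolar I e.intent ∪ A := by
  rw [← e.lowerPolar_intent, lowerPolar_enrich]
  exact union_subset_union_right _ inter_subset_left

lemma intent_subset_upperPolar_extent_union (e : Concept G M (enrich I A B)) :
    e.intent ⊆ upperPolar I e.extent ∪ B := by
  rw [← e.upperPolar_extent, upperPolar_enrich]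
  exact union_subset_union_right _ inter_subset_left

lemma lowerPolar_intent_subset_extent (e : Concept G M (enrich I A B)) :
    lowerPolar I e.intent ⊆ e.extent := by
  rw [← e.lowerPolar_intent, lowerPolar_enrich]
  exact subset_union_left

variable {cbot ctop : Concept G M I}

lemma upperPolar_enrich_extent_of_le {c : Concept G M I} (hc : c ≤ ctop) :
    upperPolar (enrich I ctop.extent cbot.intent) c.extent = c.intent ∪ cbot.intent := by
  rw [upperPolar_enrich, c.upperPolar_extent, sdiff_eq_empty.2 hc, upperPolar_empty, inter_univ]

lemma lowerPolar_enrich_intent_of_le {c : Concept G M I} (hc : cbot ≤ c) :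
    lowerPolar (enrich I ctop.extent cbot.intent) c.intent = c.extent ∪ ctop.extent := by
  rw [lowerPolar_enrich, c.lowerPolar_intent, sdiff_eq_empty.2 (intent_subset_intent_iff.2 hc),
    lowerPolar_empty, inter_univ]

lemma isExtent_extent_of_subset (e : Concept G M (enrich I ctop.extent cbot.intent))
    (he : e.extent ⊆ ctop.extent) : Order.IsExtent I e.extent := by
  have : e.extent = ctop.extent ∩ lowerPolar I (e.intent \ cbot.intent) := by
    refine subset_antisymm (subset_inter he ?_) ?_
    · rw [← e.lowerPolar_intent, lowerPolar_enrich]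
      exact union_subset (lowerPolar_anti I sdiff_subset) inter_subset_right
    · rw [← e.lowerPolar_intent, lowerPolar_enrich]
      exact subset_union_right
  exact this ▸ ctop.isExtent_extent.inter Order.isExtent_lowerPolar

lemma isIntent_intent_of_subset (e : Concept G M (enrich I ctop.extent cbot.intent))
    (he : e.intent ⊆ cbot.intent) : Order.IsIntent I e.intent := by
  have : e.intent = cbot.intent ∩ upperPolar I (e.extent \ ctop.extent) := by
    refine subset_antisymm (subset_inter he ?_) ?_
    · rw [← e.upperPolar_extent, upperPolar_enrich]
      exact union_subset (upperPolar_anti I sdiff_subset) inter_subset_right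
    · rw [← e.upperPolar_extent, upperPolar_enrich]
      exact subset_union_right
  exact this ▸ cbot.isIntent_intent.inter Order.isIntent_upperPolar

lemma isExtent_extent_of_not_subset (hle : cbot ≤ ctop) (hpure : ¬ iNested cbot ctop)
    (e : Concept G M (enrich I ctop.extent cbot.intent)) (hA : ¬ e.extent ⊆ ctop.extent)
    (hB : ¬ e.intent ⊆ cbot.intent) : Order.IsExtent I e.extent := by
  set x := ofAttributes I e.intent
  set y := ofObjects I e.extent
  have hex : e.extent ⊆ x.extent ∪ ctop.extent := extent_subset_lowerPolar_intent_union e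
  have hiy : e.intent ⊆ y.intent ∪ cbot.intent := intent_subset_upperPolar_extent_union e
  have hxe : x.extent ⊆ e.extent := lowerPolar_intent_subset_extent e
  have hey : e.extent ⊆ y.extent := subset_lowerPolar_upperPolar I e.extent
  have hxy : x ≤ y := hxe.trans hey
  have hjoin : x ⊔ (y ⊓ ctop) = y := by
    refine le_antisymm (sup_le hxy inf_le_left) (ofObjects_le_iff.2 fun g hg => ?_)
    obtain hgx | hgt := hex hg
    exacts [(le_sup_left : x ≤ _) hgx, (le_sup_right : y ⊓ ctop ≤ _) ⟨hey hg, hgt⟩]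
  have hmeet : y ⊓ (x ⊔ cbot) = x := by
    refine le_antisymm (le_ofAttributes_iff.2 fun m hm => ?_) (le_inf hxy le_sup_left)
    obtain hmy | hmb := hiy hm
    exacts [intent_subset_intent_iff.2 inf_le_left hmy,
      intent_subset_intent_iff.2 inf_le_right ⟨subset_upperPolar_lowerPolar I _ hm, hmb⟩]
  have hxy' : x = y := eq_of_not_iNested hle hpure hxy hjoin hmeet
    (fun h => hB (hiy.trans (union_subset (intent_subset_intent_iff.2 h) subset_rfl)))
    (fun h => hA (hex.trans (union_subset h subset_rfl)))
  rw [subset_antisymm (hxy' ▸ hey) hxe]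
  exact x.isExtent_extent

variable [Finite G]

lemma inter_lowerPolar_diff_subset_extent (hle : cbot ≤ ctop) (hpure : ¬ iNested cbot ctop)
    (hatt : ∀ c : Concept G M I, ThetaInfIrred cbot ctop c →
      ∃ m : M, c.extent = lowerPolar I {m})
    {c : Concept G M I} (hc : ¬ cbot ≤ c) :
    ctop.extent ∩ lowerPolar I (c.intent \ cbot.intent) ⊆ c.extent := by
  set q := ctop ⊓ ofAttributes I (c.intent \ cbot.intent)
  have hq : c.intent \ cbot.intent ⊆ q.intent :=
    le_ofAttributes_iff.1 (inf_le_right : q ≤ ofAttributes I _)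
  obtain ⟨m₀, hm₀⟩ := sdiff_nonempty.2 fun h => hc (intent_subset_intent_iff.1 h)
  have hqdown : q ∈ iSdown cbot ctop := (mem_iSdown_iff hle).2
    ⟨fun h => hm₀.2 (intent_subset_intent_iff.2 h (hq hm₀)), inf_le_left⟩
  refine extent_subset_extent_iff.2 <|
    le_of_forall_thetaInfIrred hle hpure hqdown hc fun t ht hct hbt => ?_
  obtain ⟨m, hm⟩ := hatt t ht
  obtain rfl : t = ofAttribute I m := ext hm
  rw [le_ofAttributes_iff, singleton_subset_iff] at hct hbt ⊢
  exact hq ⟨hct, hbt⟩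

lemma inter_upperPolar_diff_subset_intent (hle : cbot ≤ ctop) (hpure : ¬ iNested cbot ctop)
    (hobj : ∀ c : Concept G M I, ThetaSupIrred cbot ctop c →
      ∃ g : G, c.intent = upperPolar I {g})
    {c : Concept G M I} (hc : ¬ c ≤ ctop) :
    cbot.intent ∩ upperPolar I (c.extent \ ctop.extent) ⊆ c.intent := by
  set p := cbot ⊔ ofObjects I (c.extent \ ctop.extent)
  have hp : c.extent \ ctop.extent ⊆ p.extent :=
    ofObjects_le_iff.1 (le_sup_right : ofObjects I _ ≤ p)
  obtain ⟨g₀, hg₀⟩ := sdiff_nonempty.2 fun h => hc (extent_subset_extent_iff.1 h)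
  have hpup : p ∈ iSupSet cbot ctop := (mem_iSupSet_iff hle).2
    ⟨le_sup_left, fun h => hg₀.2 (extent_subset_extent_iff.2 h (hp hg₀))⟩
  refine intent_subset_intent_iff.2 <|
    le_of_forall_thetaSupIrred hle hpure hpup hc fun t ht htc htt => ?_
  obtain ⟨g, hg⟩ := hobj t ht
  obtain rfl : t = ofObject I g := ext' hg
  rw [ofObjects_le_iff, singleton_subset_iff] at htc htt ⊢
  exact hp ⟨htc, htt⟩

lemma upperPolar_enrich_extent_of_not_le (hle : cbot ≤ ctop) (hpure : ¬ iNested cbot ctop)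
    (hobj : ∀ c : Concept G M I, ThetaSupIrred cbot ctop c →
      ∃ g : G, c.intent = upperPolar I {g})
    {c : Concept G M I} (hc : ¬ c ≤ ctop) :
    upperPolar (enrich I ctop.extent cbot.intent) c.extent = c.intent := by
  rw [upperPolar_enrich, c.upperPolar_extent,
    union_eq_left.2 (inter_upperPolar_diff_subset_intent hle hpure hobj hc)]

lemma lowerPolar_enrich_intent_of_not_le (hle : cbot ≤ ctop) (hpure : ¬ iNested cbot ctop)
    (hatt : ∀ c : Concept G M I, ThetaInfIrred cbot ctop c →
      ∃ m : M, c.extent = lowerPolar I {m})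
    {c : Concept G M I} (hc : ¬ cbot ≤ c) :
    lowerPolar (enrich I ctop.extent cbot.intent) c.intent = c.extent := by
  rw [lowerPolar_enrich, c.lowerPolar_intent,
    union_eq_left.2 (inter_lowerPolar_diff_subset_extent hle hpure hatt hc)]

lemma extent_ofObjects_enrich (hle : cbot ≤ ctop) (hpure : ¬ iNested cbot ctop)
    (hobj : ∀ c : Concept G M I, ThetaSupIrred cbot ctop c →
      ∃ g : G, c.intent = upperPolar I {g})
    (c : Concept G M I) :
    (ofObjects (enrich I ctop.extent cbot.intent) c.extent).extent =
      lowerPolar (enrich I ctop.extent cbot.intent) c.intent := by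
  change lowerPolar _ (upperPolar _ c.extent) = _
  by_cases hc : c ≤ ctop
  · have hcbot : lowerPolar (enrich I ctop.extent cbot.intent) cbot.intent = ctop.extent := by
      rw [lowerPolar_enrich_intent_of_le le_rfl, union_eq_right.2 hle]
    rw [upperPolar_enrich_extent_of_le hc, lowerPolar_union, hcbot, inter_eq_left,
      lowerPolar_enrich, c.lowerPolar_intent]
    exact union_subset hc inter_subset_left
  · rw [upperPolar_enrich_extent_of_not_le hle hpure hobj hc]

lemma surjective_ofObjects_enrich (hle : cbot ≤ ctop) (hpure : ¬ iNested cbot ctop)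
    (hobj : ∀ c : Concept G M I, ThetaSupIrred cbot ctop c →
      ∃ g : G, c.intent = upperPolar I {g}) :
    Function.Surjective fun c : Concept G M I =>
      ofObjects (enrich I ctop.extent cbot.intent) c.extent := by
  intro e
  by_cases hB : e.intent ⊆ cbot.intent
  · refine ⟨ofIsIntent I _ (isIntent_intent_of_subset e hB), ext ?_⟩
    rw [extent_ofObjects_enrich hle hpure hobj]
    exact e.lowerPolar_intent
  · have he : Order.IsExtent I e.extent := by
      by_cases hA : e.extent ⊆ ctop.extent
      exacts [isExtent_extent_of_subset e hA, isExtent_extent_of_not_subset hle hpure e hA hB]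
    exact ⟨ofIsExtent I _ he, ext' e.upperPolar_extent⟩

end Concept

theorem surjective_monotone_onto_enriched_general {G M : Type*} [Finite G]
    (I : G → M → Prop) (cbot ctop : Concept G M I) (hle : cbot ≤ ctop)
    (hpure : ¬ iNested cbot ctop)
    (hobj : ∀ c : Concept G M I, ThetaSupIrred cbot ctop c →
      ∃ g : G, c.intent = upperPolar I {g})
    (hatt : ∀ c : Concept G M I, ThetaInfIrred cbot ctop c →
      ∃ m : M, c.extent = lowerPolar I {m})
    (IS : G → M → Prop)
    (hIS : ∀ g m, IS g m ↔ (I g m ∨ (g ∈ ctop.extent ∧ m ∈ cbot.intent))) :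
    ∃ φ : Concept G M I → Concept G M IS,
      Function.Surjective φ ∧ Monotone φ ∧
      (∀ c : Concept G M I, c ∈ Set.Icc cbot ctop →
        (φ c).extent = ctop.extent ∧ (φ c).intent = cbot.intent) ∧
      (∀ c : Concept G M I, c ∈ iSdown cbot ctop →
        (φ c).extent = c.extent ∧ (φ c).intent = c.intent ∪ cbot.intent) ∧
      (∀ c : Concept G M I, c ∈ iSupSet cbot ctop →
        (φ c).extent = c.extent ∪ ctop.extent ∧ (φ c).intent = c.intent) ∧
      (∀ c : Concept G M I, c ∈ iSpar cbot ctop →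
        (φ c).extent = c.extent ∧ (φ c).intent = c.intent) := by
  obtain rfl : IS = enrich I ctop.extent cbot.intent := funext₂ fun g m => propext (hIS g m)
  have hext := Concept.extent_ofObjects_enrich hle hpure hobj
  refine ⟨fun c => Concept.ofObjects _ c.extent, Concept.surjective_ofObjects_enrich hle hpure hobj,
    fun c d hcd => Concept.ofObjects_le_iff.2 ((Concept.extent_subset_extent_iff.2 hcd).trans
      (subset_lowerPolar_upperPolar _ _)), ?_, ?_, ?_, ?_⟩
  · rintro c ⟨hbc, hct⟩
    exact ⟨(hext c).trans <|
        (Concept.lowerPolar_enrich_intent_of_le hbc).trans (union_eq_right.2 hct),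
      (Concept.upperPolar_enrich_extent_of_le hct).trans
        (union_eq_right.2 (Concept.intent_subset_intent_iff.2 hbc))⟩
  · intro c hc
    obtain ⟨hbc, hct⟩ := (mem_iSdown_iff hle).1 hc
    exact ⟨(hext c).trans (Concept.lowerPolar_enrich_intent_of_not_le hle hpure hatt hbc),
      Concept.upperPolar_enrich_extent_of_le hct⟩
  · intro c hc
    obtain ⟨hbc, hct⟩ := (mem_iSupSet_iff hle).1 hc
    exact ⟨(hext c).trans (Concept.lowerPolar_enrich_intent_of_le hbc),
      Concept.upperPolar_enrich_extent_of_not_le hle hpure hobj hct⟩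
  · intro c hc
    obtain ⟨hbc, hct⟩ := (mem_iSpar_iff hle).1 hc
    exact ⟨(hext c).trans (Concept.lowerPolar_enrich_intent_of_not_le hle hpure hatt hbc),
      Concept.upperPolar_enrich_extent_of_not_le hle hpure hobj hct⟩

/-- Let `(G,M,I)` be a `θ`-irreducible context (every `θ`-`⋁`-irreducible
concept is an object concept and every `θ`-`⋀`-irreducible concept is an attribute concept)
and `S = [(A_S,B_S),(C_S,D_S)]` a pure interval of its concept lattice. Then the map sending
`(A,B)` to `(C_S,B_S)` on `S`, to `(A, B ∪ B_S)` on `S↓`, to `(A ∪ C_S, B)` on `S↑` and fixing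
`S∥`, is a surjective order-preserving map onto the concept lattice of the enriched context
`(G, M, I_S)`. -/
theorem surjective_monotone_onto_enriched {G M : Type*} [Finite G] [Finite M]
    (I : G → M → Prop) (cbot ctop : Concept G M I) (hle : cbot ≤ ctop)
    (hpure : ¬ iNested cbot ctop)
    (hobj : ∀ c : Concept G M I, ThetaSupIrred cbot ctop c →
      ∃ g : G, c.intent = upperPolar I {g})
    (hatt : ∀ c : Concept G M I, ThetaInfIrred cbot ctop c →
      ∃ m : M, c.extent = lowerPolar I {m})
    (IS : G → M → Prop)
    (hIS : ∀ g m, IS g m ↔ (I g m ∨ (g ∈ ctop.extent ∧ m ∈ cbot.intent))) :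
    ∃ φ : Concept G M I → Concept G M IS,
      Function.Surjective φ ∧ Monotone φ ∧
      (∀ c : Concept G M I, c ∈ Set.Icc cbot ctop →
        (φ c).extent = ctop.extent ∧ (φ c).intent = cbot.intent) ∧
      (∀ c : Concept G M I, c ∈ iSdown cbot ctop →
        (φ c).extent = c.extent ∧ (φ c).intent = c.intent ∪ cbot.intent) ∧
      (∀ c : Concept G M I, c ∈ iSupSet cbot ctop →
        (φ c).extent = c.extent ∪ ctop.extent ∧ (φ c).intent = c.intent) ∧
      (∀ c : Concept G M I, c ∈ iSpar cbot ctop →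
        (φ c).extent = c.extent ∧ (φ c).intent = c.intent) :=
  surjective_monotone_onto_enriched_general I cbot ctop hle hpure hobj hatt IS hIS
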